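/- arXiv:0802.2191 — 2 statements merged into one kernel-verified Lean document; each statement's English description precedes it below -/
import Mathlib

section
/- With E = 4u² cosh² v/(u² + cosh² v)², G = (u² - cosh² v)²/(u² + cosh² v)², ν₁ = (u² - cosh² v)/(2u cosh v), ν₂ = -2u cosh v/(u² - cosh² v), one has √(EG)·|ν₁ - ν₂| = 1 at every point with u > 0 and u² ≠ cosh² v; hence by the criterion of Proposition 4.7 these parameters are geometric principal parameters. -/
/-- For the Kuen surface in canonical principal parameters,
√(EG)·|ν₁ - ν₂| = 1, so by Proposition 4.7 the parameters are geometric. -/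
theorem kuen_geometric_parameters (u v : ℝ) (hu : 0 < u)
    (h : u ^ 2 ≠ Real.cosh v ^ 2) :
    Real.sqrt ((4 * u ^ 2 * Real.cosh v ^ 2 / (u ^ 2 + Real.cosh v ^ 2) ^ 2) *
          ((u ^ 2 - Real.cosh v ^ 2) ^ 2 / (u ^ 2 + Real.cosh v ^ 2) ^ 2)) *
        |(u ^ 2 - Real.cosh v ^ 2) / (2 * u * Real.cosh v) -
          (-(2 * u * Real.cosh v) / (u ^ 2 - Real.cosh v ^ 2))| = 1 := by
  have hc : 0 < Real.cosh v := Real.cosh_pos v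
  set c := Real.cosh v with hcdef
  have hd : u ^ 2 - c ^ 2 ≠ 0 := sub_ne_zero.mpr h
  have hs : (0:ℝ) < u ^ 2 + c ^ 2 := by positivity
  have hsq : (4 * u ^ 2 * c ^ 2 / (u ^ 2 + c ^ 2) ^ 2) *
      ((u ^ 2 - c ^ 2) ^ 2 / (u ^ 2 + c ^ 2) ^ 2)
      = ((2 * u * c * (u ^ 2 - c ^ 2)) / (u ^ 2 + c ^ 2) ^ 2) ^ 2 := by
    field_simp
    ring
  rw [hsq, Real.sqrt_sq_eq_abs, ← abs_mul]
  have : (2 * u * c * (u ^ 2 - c ^ 2)) / (u ^ 2 + c ^ 2) ^ 2 *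
      ((u ^ 2 - c ^ 2) / (2 * u * c) - -(2 * u * c) / (u ^ 2 - c ^ 2)) = 1 := by
    field_simp
    ring
  rw [this, abs_one]
end

section
/- Let t, e₁, e₂ : J → ℝ³ be smooth vector-valued functions satisfying the Frenet-type system t' = κ cos θ · e₁ - κ sin θ · e₂, e₁' = -κ cos θ · t, e₂' = κ sin θ · t for smooth functions κ, θ : J → ℝ. If at some point v₀ the vectors t, e₁, e₂ form an orthonormal triple, then they form an orthonormal triple for all v ∈ J. -/
open scoped RealInnerProductSpace NNReal

/-- An orthonormal triple of vectors in ℝ³. -/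
def OrthonormalTriple (a b c : EuclideanSpace ℝ (Fin 3)) : Prop :=
  inner ℝ a a = (1 : ℝ) ∧ inner ℝ b b = (1 : ℝ) ∧ inner ℝ c c = (1 : ℝ) ∧
  inner ℝ a b = (0 : ℝ) ∧ inner ℝ a c = (0 : ℝ) ∧ inner ℝ b c = (0 : ℝ)

lemma vec6_0 {α} (a0 a1 a2 a3 a4 a5 : α) : ![a0,a1,a2,a3,a4,a5] 0 = a0 := rfl
lemma vec6_1 {α} (a0 a1 a2 a3 a4 a5 : α) : ![a0,a1,a2,a3,a4,a5] 1 = a1 := rfl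
lemma vec6_2 {α} (a0 a1 a2 a3 a4 a5 : α) : ![a0,a1,a2,a3,a4,a5] 2 = a2 := rfl
lemma vec6_3 {α} (a0 a1 a2 a3 a4 a5 : α) : ![a0,a1,a2,a3,a4,a5] 3 = a3 := rfl
lemma vec6_4 {α} (a0 a1 a2 a3 a4 a5 : α) : ![a0,a1,a2,a3,a4,a5] 4 = a4 := rfl
lemma vec6_5 {α} (a0 a1 a2 a3 a4 a5 : α) : ![a0,a1,a2,a3,a4,a5] 5 = a5 := rfl
lemma vec6_mk0 {α} (a0 a1 a2 a3 a4 a5 : α) (h : 0 < 6) : ![a0,a1,a2,a3,a4,a5] ⟨0,h⟩ = a0 := rfl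
lemma vec6_mk1 {α} (a0 a1 a2 a3 a4 a5 : α) (h : 1 < 6) : ![a0,a1,a2,a3,a4,a5] ⟨1,h⟩ = a1 := rfl
lemma vec6_mk2 {α} (a0 a1 a2 a3 a4 a5 : α) (h : 2 < 6) : ![a0,a1,a2,a3,a4,a5] ⟨2,h⟩ = a2 := rfl
lemma vec6_mk3 {α} (a0 a1 a2 a3 a4 a5 : α) (h : 3 < 6) : ![a0,a1,a2,a3,a4,a5] ⟨3,h⟩ = a3 := rfl
lemma vec6_mk4 {α} (a0 a1 a2 a3 a4 a5 : α) (h : 4 < 6) : ![a0,a1,a2,a3,a4,a5] ⟨4,h⟩ = a4 := rfl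
lemma vec6_mk5 {α} (a0 a1 a2 a3 a4 a5 : α) (h : 5 < 6) : ![a0,a1,a2,a3,a4,a5] ⟨5,h⟩ = a5 := rfl

/-- The linear vector field governing the six inner-product deviations. -/
def frenetV (C S : ℝ) (y : Fin 6 → ℝ) : Fin 6 → ℝ :=
  ![2*C*y 3 - 2*S*y 4,
    -(2*C*y 3),
    2*S*y 4,
    C*y 1 - S*y 5 - C*y 0,
    C*y 5 - S*y 2 + S*y 0,
    -(C*y 4) + S*y 3]

lemma frenetV_zero (C S : ℝ) : frenetV C S 0 = 0 := by
  funext i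
  fin_cases i <;>
    simp [frenetV, vec6_0, vec6_1, vec6_2, vec6_3, vec6_4, vec6_5, vec6_mk0, vec6_mk1, vec6_mk2, vec6_mk3, vec6_mk4, vec6_mk5, Pi.zero_apply]

lemma abs_comb {c1 c2 c3 d1 d2 d3 B d : ℝ} (h1 : |c1| ≤ B) (h2 : |c2| ≤ B)
    (h3 : |c3| ≤ B) (e1 : |d1| ≤ d) (e2 : |d2| ≤ d) (e3 : |d3| ≤ d) :
    |c1*d1 + c2*d2 + c3*d3| ≤ 3*(B*d) := by
  have hB : 0 ≤ B := le_trans (abs_nonneg _) h1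
  have hd : 0 ≤ d := le_trans (abs_nonneg _) e1
  have b1 : |c1*d1| ≤ B*d := by rw [abs_mul]; exact mul_le_mul h1 e1 (abs_nonneg _) hB
  have b2 : |c2*d2| ≤ B*d := by rw [abs_mul]; exact mul_le_mul h2 e2 (abs_nonneg _) hB
  have b3 : |c3*d3| ≤ B*d := by rw [abs_mul]; exact mul_le_mul h3 e3 (abs_nonneg _) hB
  have habs : |c1*d1 + c2*d2 + c3*d3| ≤ |c1*d1| + |c2*d2| + |c3*d3| := abs_add_three _ _ _
  linarith

lemma frenetV_lipschitz {M C S : ℝ} (hM : 0 ≤ M) (hC : |C| ≤ M) (hS : |S| ≤ M) :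
    LipschitzWith (Real.toNNReal (6*M)) (frenetV C S) := by
  apply LipschitzWith.of_dist_le_mul
  intro y z
  have hcoe : ((Real.toNNReal (6*M) : ℝ≥0) : ℝ) = 6*M :=
    Real.coe_toNNReal _ (by positivity)
  rw [hcoe]
  have hd : 0 ≤ dist y z := dist_nonneg
  rw [dist_pi_le_iff (by positivity)]
  intro i
  have hdy : ∀ j, |y j - z j| ≤ dist y z := fun j => by
    rw [← Real.dist_eq]; exact dist_le_pi_dist y z j
  have hC2 : |2*C| ≤ 2*M := by rw [abs_mul]; simpa using by nlinarith [abs_nonneg C]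
  have hS2 : |2*S| ≤ 2*M := by rw [abs_mul]; simpa using by nlinarith [abs_nonneg S]
  have hC2' : |C| ≤ 2*M := le_trans hC (by linarith)
  have hS2' : |S| ≤ 2*M := le_trans hS (by linarith)
  have hnC2' : |(-C)| ≤ 2*M := by rwa [abs_neg]
  have hnS2' : |(-S)| ≤ 2*M := by rwa [abs_neg]
  have hn2C : |(-(2*C))| ≤ 2*M := by rwa [abs_neg]
  have hn2S : |(-(2*S))| ≤ 2*M := by rwa [abs_neg]
  have h02 : |(0:ℝ)| ≤ 2*M := by simp; positivity
  rw [Real.dist_eq]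
  fin_cases i <;>
    simp only [frenetV, vec6_0, vec6_1, vec6_2, vec6_3, vec6_4, vec6_5, vec6_mk0, vec6_mk1, vec6_mk2, vec6_mk3, vec6_mk4, vec6_mk5]
  · have he : (2*C*y 3 - 2*S*y 4) - (2*C*z 3 - 2*S*z 4)
        = (2*C)*(y 3 - z 3) + (-(2*S))*(y 4 - z 4) + 0*(y 0 - z 0) := by ring
    rw [he]
    have := abs_comb (d := dist y z) hC2 hn2S h02 (hdy 3) (hdy 4) (hdy 0)
    linarith
  · have he : (-(2*C*y 3)) - (-(2*C*z 3))
        = (-(2*C))*(y 3 - z 3) + 0*(y 4 - z 4) + 0*(y 0 - z 0) := by ring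
    rw [he]
    have := abs_comb (d := dist y z) hn2C h02 h02 (hdy 3) (hdy 4) (hdy 0)
    linarith
  · have he : (2*S*y 4) - (2*S*z 4)
        = (2*S)*(y 4 - z 4) + 0*(y 3 - z 3) + 0*(y 0 - z 0) := by ring
    rw [he]
    have := abs_comb (d := dist y z) hS2 h02 h02 (hdy 4) (hdy 3) (hdy 0)
    linarith
  · have he : (C*y 1 - S*y 5 - C*y 0) - (C*z 1 - S*z 5 - C*z 0)
        = C*(y 1 - z 1) + (-S)*(y 5 - z 5) + (-C)*(y 0 - z 0) := by ring
    rw [he]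
    have := abs_comb (d := dist y z) hC2' hnS2' hnC2' (hdy 1) (hdy 5) (hdy 0)
    linarith
  · have he : (C*y 5 - S*y 2 + S*y 0) - (C*z 5 - S*z 2 + S*z 0)
        = C*(y 5 - z 5) + (-S)*(y 2 - z 2) + S*(y 0 - z 0) := by ring
    rw [he]
    have := abs_comb (d := dist y z) hC2' hnS2' hS2' (hdy 5) (hdy 2) (hdy 0)
    linarith
  · have he : (-(C*y 4) + S*y 3) - (-(C*z 4) + S*z 3)
        = (-C)*(y 4 - z 4) + S*(y 3 - z 3) + 0*(y 0 - z 0) := by ring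
    rw [he]
    have := abs_comb (d := dist y z) hnC2' hS2' h02 (hdy 4) (hdy 3) (hdy 0)
    linarith

/-- If t, e₁, e₂ satisfy the Frenet-type system (2.9) on an interval J and are
orthonormal at some v₀ ∈ J, then they are orthonormal on all of J. -/
theorem frenet_system_preserves_orthonormality (J : Set ℝ) (hJ : J.OrdConnected)
    (t e₁ e₂ : ℝ → EuclideanSpace ℝ (Fin 3)) (κ θ : ℝ → ℝ)
    (hκ : ContDiff ℝ (⊤ : ℕ∞) κ) (hθ : ContDiff ℝ (⊤ : ℕ∞) θ)
    (ht : ∀ v ∈ J, HasDerivAt t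
      ((κ v * Real.cos (θ v)) • e₁ v - (κ v * Real.sin (θ v)) • e₂ v) v)
    (he₁ : ∀ v ∈ J, HasDerivAt e₁ (-((κ v * Real.cos (θ v)) • t v)) v)
    (he₂ : ∀ v ∈ J, HasDerivAt e₂ ((κ v * Real.sin (θ v)) • t v) v)
    (v₀ : ℝ) (hv₀ : v₀ ∈ J) (h₀ : OrthonormalTriple (t v₀) (e₁ v₀) (e₂ v₀)) :
    ∀ v ∈ J, OrthonormalTriple (t v) (e₁ v) (e₂ v) := by
  intro v hv
  set a := min v₀ v with ha
  set b := max v₀ v with hb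
  have hab : a ≤ b := min_le_max
  have hsub : Set.Icc a b ⊆ J := by
    rcases le_total v₀ v with h | h
    · rw [ha, hb, min_eq_left h, max_eq_right h]; exact hJ.out hv₀ hv
    · rw [ha, hb, min_eq_right h, max_eq_left h]; exact hJ.out hv hv₀
  -- clamp to [a,b]
  set ρ : ℝ → ℝ := fun w => max a (min b w) with hρdef
  have hρ_mem : ∀ w, ρ w ∈ Set.Icc a b := fun w =>
    ⟨le_max_left _ _, max_le hab (min_le_left _ _)⟩
  have hρ_id : ∀ w ∈ Set.Icc a b, ρ w = w := by
    intro w hw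
    rw [hρdef]; dsimp only
    rw [min_eq_right hw.2, max_eq_right hw.1]
  -- bound on κ
  obtain ⟨M, hM⟩ := isCompact_Icc.exists_bound_of_continuousOn
    (hκ.continuous.continuousOn (s := Set.Icc a b))
  have hM0 : 0 ≤ M := le_trans (norm_nonneg _) (hM a ⟨le_refl a, hab⟩)
  set C : ℝ → ℝ := fun w => κ (ρ w) * Real.cos (θ (ρ w)) with hCdef
  set S : ℝ → ℝ := fun w => κ (ρ w) * Real.sin (θ (ρ w)) with hSdef
  have hCb : ∀ w, |C w| ≤ M := by
    intro w
    rw [hCdef]; dsimp only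
    rw [abs_mul]
    calc |κ (ρ w)| * |Real.cos (θ (ρ w))| ≤ M * 1 := by
          apply mul_le_mul (hM _ (hρ_mem w)) (Real.abs_cos_le_one _) (abs_nonneg _) hM0
      _ = M := mul_one M
  have hSb : ∀ w, |S w| ≤ M := by
    intro w
    rw [hSdef]; dsimp only
    rw [abs_mul]
    calc |κ (ρ w)| * |Real.sin (θ (ρ w))| ≤ M * 1 := by
          apply mul_le_mul (hM _ (hρ_mem w)) (Real.abs_sin_le_one _) (abs_nonneg _) hM0
      _ = M := mul_one M
  set vf : ℝ → (Fin 6 → ℝ) → (Fin 6 → ℝ) := fun w => frenetV (C w) (S w) with hvfdef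
  have hlip : ∀ w, LipschitzWith (Real.toNNReal (6*M)) (vf w) := fun w =>
    frenetV_lipschitz hM0 (hCb w) (hSb w)
  set x : ℝ → Fin 6 → ℝ := fun w =>
    ![(inner ℝ (t w) (t w) : ℝ) - 1, (inner ℝ (e₁ w) (e₁ w) : ℝ) - 1,
      (inner ℝ (e₂ w) (e₂ w) : ℝ) - 1, (inner ℝ (t w) (e₁ w) : ℝ),
      (inner ℝ (t w) (e₂ w) : ℝ), (inner ℝ (e₁ w) (e₂ w) : ℝ)] with hxdef
  have hxderiv : ∀ w ∈ Set.Icc a b, HasDerivAt x (vf w (x w)) w := by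
    intro w hw
    have hwJ : w ∈ J := hsub hw
    have hCw : C w = κ w * Real.cos (θ w) := by rw [hCdef]; dsimp only; rw [hρ_id w hw]
    have hSw : S w = κ w * Real.sin (θ w) := by rw [hSdef]; dsimp only; rw [hρ_id w hw]
    have Dt := ht w hwJ
    have D1 := he₁ w hwJ
    have D2 := he₂ w hwJ
    rw [hasDerivAt_pi]
    intro i
    fin_cases i <;>
      simp only [hxdef, hvfdef, frenetV, vec6_0, vec6_1, vec6_2, vec6_3, vec6_4, vec6_5, vec6_mk0, vec6_mk1, vec6_mk2, vec6_mk3, vec6_mk4, vec6_mk5,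
        hCw, hSw]
    · have h := (Dt.inner ℝ Dt).sub_const 1
      convert h using 1
      simp only [inner_sub_left, inner_sub_right, inner_neg_left, inner_neg_right,
        inner_smul_left, inner_smul_right, conj_trivial,
        real_inner_comm (e₁ w) (t w), real_inner_comm (e₂ w) (t w),
        real_inner_comm (e₂ w) (e₁ w)]
      ring
    · have h := (D1.inner ℝ D1).sub_const 1
      convert h using 1
      simp only [inner_sub_left, inner_sub_right, inner_neg_left, inner_neg_right,
        inner_smul_left, inner_smul_right, conj_trivial,
        real_inner_comm (e₁ w) (t w), real_inner_comm (e₂ w) (t w),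
        real_inner_comm (e₂ w) (e₁ w)]
      ring
    · have h := (D2.inner ℝ D2).sub_const 1
      convert h using 1
      simp only [inner_sub_left, inner_sub_right, inner_neg_left, inner_neg_right,
        inner_smul_left, inner_smul_right, conj_trivial,
        real_inner_comm (e₁ w) (t w), real_inner_comm (e₂ w) (t w),
        real_inner_comm (e₂ w) (e₁ w)]
      ring
    · have h := Dt.inner ℝ D1
      convert h using 1
      · rfl
      simp only [inner_sub_left, inner_sub_right, inner_neg_left, inner_neg_right,
        inner_smul_left, inner_smul_right, conj_trivial,
        real_inner_comm (e₁ w) (t w), real_inner_comm (e₂ w) (t w),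
        real_inner_comm (e₂ w) (e₁ w)]
      ring
    · have h := Dt.inner ℝ D2
      convert h using 1
      · rfl
      simp only [inner_sub_left, inner_sub_right, inner_neg_left, inner_neg_right,
        inner_smul_left, inner_smul_right, conj_trivial,
        real_inner_comm (e₁ w) (t w), real_inner_comm (e₂ w) (t w),
        real_inner_comm (e₂ w) (e₁ w)]
      ring
    · have h := D1.inner ℝ D2
      convert h using 1
      · rfl
      simp only [inner_sub_left, inner_sub_right, inner_neg_left, inner_neg_right,
        inner_smul_left, inner_smul_right, conj_trivial,
        real_inner_comm (e₁ w) (t w), real_inner_comm (e₂ w) (t w),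
        real_inner_comm (e₂ w) (e₁ w)]
      ring
  have hxcont : ContinuousOn x (Set.Icc a b) := fun w hw =>
    ((hxderiv w hw).continuousAt).continuousWithinAt
  have hx0 : x v₀ = 0 := by
    obtain ⟨h1, h2, h3, h4, h5, h6⟩ := h₀
    funext i
    fin_cases i <;>
      simp only [hxdef, vec6_0, vec6_1, vec6_2, vec6_3, vec6_4, vec6_5, vec6_mk0, vec6_mk1, vec6_mk2, vec6_mk3, vec6_mk4, vec6_mk5, Pi.zero_apply,
        h1, h2, h3, h4, h5, h6, sub_self]
  have hvf0 : ∀ w, vf w 0 = 0 := fun w => frenetV_zero _ _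
  -- uniqueness of ODE solutions: x agrees with the zero solution on [a, b]
  have hzero : ∀ w, HasDerivAt (fun _ : ℝ => (0 : Fin 6 → ℝ)) (vf w ((fun _ : ℝ => (0 : Fin 6 → ℝ)) w)) w := by
    intro w
    simpa [hvf0 w] using (hasDerivAt_const w (0 : Fin 6 → ℝ))
  have hxv : x v = 0 := by
    rcases le_total v₀ v with h | h
    · have hav : a = v₀ := min_eq_left h
      have hbv : b = v := max_eq_right h
      have key := ODE_solution_unique_of_mem_Icc_right (v := vf)
        (s := fun _ => Set.univ) (K := Real.toNNReal (6*M))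
        (fun w _ => (hlip w).lipschitzOnWith)
        (hav ▸ hbv ▸ hxcont)
        (fun w hw => (hxderiv w ⟨hav ▸ hw.1, hbv ▸ hw.2.le⟩).hasDerivWithinAt)
        (fun _ _ => Set.mem_univ _)
        continuousOn_const
        (fun w _ => (hzero w).hasDerivWithinAt)
        (fun _ _ => Set.mem_univ _)
        hx0
      exact key ⟨h, le_refl v⟩
    · have hav : a = v := min_eq_right h
      have hbv : b = v₀ := max_eq_left h
      have key := ODE_solution_unique_of_mem_Icc_left (v := vf)
        (s := fun _ => Set.univ) (K := Real.toNNReal (6*M))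
        (fun w _ => (hlip w).lipschitzOnWith)
        (hav ▸ hbv ▸ hxcont)
        (fun w hw => (hxderiv w ⟨hav ▸ hw.1.le, hbv ▸ hw.2⟩).hasDerivWithinAt)
        (fun _ _ => Set.mem_univ _)
        continuousOn_const
        (fun w _ => (hzero w).hasDerivWithinAt)
        (fun _ _ => Set.mem_univ _)
        hx0
      exact key ⟨le_refl v, h⟩
  have h0 : ∀ i, x v i = 0 := fun i => congrFun hxv i
  have e0 := h0 0; have e1 := h0 1; have e2 := h0 2
  have e3 := h0 3; have e4 := h0 4; have e5 := h0 5
  simp only [hxdef, vec6_0, vec6_1, vec6_2, vec6_3, vec6_4, vec6_5, vec6_mk0, vec6_mk1, vec6_mk2, vec6_mk3, vec6_mk4, vec6_mk5,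
    Pi.zero_apply] at e0 e1 e2 e3 e4 e5
  exact ⟨by linarith, by linarith, by linarith, e3, e4, e5⟩
end
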